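/- arXiv:1902.08336 — 3 statements merged into one kernel-verified Lean document; each statement's English description precedes it below -/
import Mathlib

section
/- Let d ≥ 1, let B^d be the closed Euclidean unit ball in ℝ^d, and let ν_d be the uniform probability measure on B^d (Lebesgue measure restricted to B^d, normalized by the volume of B^d). For every Borel set B ⊆ B^d with ν_d(B) ≥ 1/2 and every ε ∈ (0, 2], the open Euclidean ε-neighborhood B_ε satisfies ν_d(B_ε) ≥ 1 − (1/ν_d(B)) · (1 − δ(ε))^{2d}, where δ(ε) = 1 − √(1 − ε²/4). -/
open MeasureTheory Real Set
open scoped ENNReal NNReal Pointwise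


lemma vol_half_shift (s : Set ℝ) (c : ℝ) :
    volume ((fun x => (x + c) / 2) '' s) = volume s / 2 := by
  have he : (fun x : ℝ => (x + c) / 2) = (fun x : ℝ => x + c / 2) ∘ (fun x : ℝ => (2⁻¹ : ℝ) • x) := by
    funext x; simp [smul_eq_mul]; ring
  rw [he, image_comp]
  have h1 : ((fun x : ℝ => (2⁻¹ : ℝ) • x) '' s) = (2⁻¹ : ℝ) • s := rfl
  rw [h1, image_add_right, measure_preimage_add_right, MeasureTheory.Measure.addHaar_smul]
  simp
  rw [ENNReal.div_eq_inv_mul]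

lemma compact_mid (K L C : Set ℝ) (hK : IsCompact K) (hL : IsCompact L)
    (hKne : K.Nonempty) (hLne : L.Nonempty)
    (hmid : ∀ a ∈ K, ∀ b ∈ L, (a + b) / 2 ∈ C) :
    volume K + volume L ≤ 2 * volume C := by
  have haK : sSup K ∈ K := hK.sSup_mem hKne
  have hbL : sInf L ∈ L := hL.sInf_mem hLne
  set a := sSup K with ha
  set b := sInf L with hb
  set S₁ : Set ℝ := (fun x => (x + b) / 2) '' K with hS₁
  set S₂ : Set ℝ := (fun y => (y + a) / 2) '' L with hS₂
  have h₁ : S₁ ⊆ C := by rintro _ ⟨x, hx, rfl⟩; exact hmid x hx b hbL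
  have h₂ : S₂ ⊆ C := by
    rintro _ ⟨y, hy, rfl⟩
    show (y + a) / 2 ∈ C
    rw [add_comm]; exact hmid a haK y hy
  have hS₂m : MeasurableSet S₂ := (hL.image (by fun_prop)).measurableSet
  have hint : S₁ ∩ S₂ ⊆ {(a + b) / 2} := by
    rintro z ⟨⟨x, hx, hxe⟩, ⟨y, hy, hye⟩⟩
    have hxa : x ≤ a := le_csSup hK.bddAbove hx
    have hby : b ≤ y := csInf_le hL.bddBelow hy
    simp only [mem_singleton_iff]
    simp only at hxe hye
    have e1 : z ≤ (a + b) / 2 := by rw [← hxe]; linarith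
    have e2 : (a + b) / 2 ≤ z := by rw [← hye]; linarith
    linarith
  have key : volume S₁ + volume S₂ = volume (S₁ ∪ S₂) + volume (S₁ ∩ S₂) :=
    (measure_union_add_inter _ hS₂m).symm
  have hz : volume (S₁ ∩ S₂) = 0 :=
    measure_mono_null hint (measure_singleton _)
  have hle : volume S₁ + volume S₂ ≤ volume C := by
    rw [key, hz, add_zero]
    exact measure_mono (union_subset h₁ h₂)
  rw [vol_half_shift K b, vol_half_shift L a] at hle
  have h2 : volume K + volume L = 2 * (volume K / 2 + volume L / 2) := by
    rw [mul_add, ENNReal.mul_div_cancel (by norm_num) (by norm_num),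
      ENNReal.mul_div_cancel (by norm_num) (by norm_num)]
  rw [h2]
  exact mul_le_mul_right hle 2

lemma onedim_mid (A B C : Set ℝ) (hA : MeasurableSet A) (hB : MeasurableSet B)
    (hAne : A.Nonempty) (hBne : B.Nonempty)
    (hmid : ∀ a ∈ A, ∀ b ∈ B, (a + b) / 2 ∈ C) :
    volume A + volume B ≤ 2 * volume C := by
  obtain ⟨a₀, ha₀⟩ := hAne
  obtain ⟨b₀, hb₀⟩ := hBne
  have instA : Nonempty {K : Set ℝ // K ⊆ A ∧ IsCompact K ∧ K.Nonempty} :=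
    ⟨⟨{a₀}, singleton_subset_iff.2 ha₀, isCompact_singleton, singleton_nonempty _⟩⟩
  have instB : Nonempty {K : Set ℝ // K ⊆ B ∧ IsCompact K ∧ K.Nonempty} :=
    ⟨⟨{b₀}, singleton_subset_iff.2 hb₀, isCompact_singleton, singleton_nonempty _⟩⟩
  have hA' : volume A ≤ ⨆ i : {K : Set ℝ // K ⊆ A ∧ IsCompact K ∧ K.Nonempty}, volume i.1 := by
    rw [hA.measure_eq_iSup_isCompact volume]
    refine iSup_le fun K => iSup_le fun hKA => iSup_le fun hKc => ?_
    refine le_trans (measure_mono (subset_insert a₀ K)) ?_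
    exact le_iSup (fun i : {K : Set ℝ // K ⊆ A ∧ IsCompact K ∧ K.Nonempty} => volume i.1)
      ⟨insert a₀ K, insert_subset ha₀ hKA, hKc.insert a₀, insert_nonempty _ _⟩
  have hB' : volume B ≤ ⨆ i : {K : Set ℝ // K ⊆ B ∧ IsCompact K ∧ K.Nonempty}, volume i.1 := by
    rw [hB.measure_eq_iSup_isCompact volume]
    refine iSup_le fun K => iSup_le fun hKB => iSup_le fun hKc => ?_
    refine le_trans (measure_mono (subset_insert b₀ K)) ?_
    exact le_iSup (fun i : {K : Set ℝ // K ⊆ B ∧ IsCompact K ∧ K.Nonempty} => volume i.1)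
      ⟨insert b₀ K, insert_subset hb₀ hKB, hKc.insert b₀, insert_nonempty _ _⟩
  refine le_trans (add_le_add hA' hB') (ENNReal.iSup_add_iSup_le fun i j => ?_)
  exact compact_mid _ _ _ i.2.2.1 j.2.2.1 i.2.2.2 j.2.2.2
    (fun a haa b hbb => hmid a (i.2.1 haa) b (j.2.1 hbb))


lemma layer (f : ℝ → ℝ≥0∞) (hf : Measurable f) (hf1 : ∀ x, f x ≤ 1) :
    ∫⁻ x, f x = ∫⁻ t in Ioi (0:ℝ), volume {x | ENNReal.ofReal t < f x} := by
  have hne : ∀ x, f x ≠ ∞ := fun x => ne_top_of_le_ne_top ENNReal.one_ne_top (hf1 x)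
  have h1 : ∀ x, ENNReal.ofReal ((f x).toReal) = f x := fun x => ENNReal.ofReal_toReal (hne x)
  have hm : Measurable fun x => (f x).toReal := hf.ennreal_toReal
  calc ∫⁻ x, f x = ∫⁻ x, ENNReal.ofReal ((f x).toReal) := by simp_rw [h1]
    _ = ∫⁻ t in Ioi (0:ℝ), volume {x | t < (f x).toReal} :=
        lintegral_eq_lintegral_meas_lt volume (ae_of_all _ fun x => ENNReal.toReal_nonneg)
          hm.aemeasurable
    _ = ∫⁻ t in Ioi (0:ℝ), volume {x | ENNReal.ofReal t < f x} := by
        refine setLIntegral_congr_fun measurableSet_Ioi fun t ht => ?_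
        congr 1
        ext x
        simp only [mem_setOf_eq]
        rw [ENNReal.ofReal_lt_iff_lt_toReal (le_of_lt ht) (hne x)]

lemma meas_level_antitone (f : ℝ → ℝ≥0∞) :
    Measurable fun t : ℝ => volume {x | ENNReal.ofReal t < f x} := by
  refine Antitone.measurable fun s t hst => ?_
  exact measure_mono fun x hx => lt_of_le_of_lt (ENNReal.ofReal_le_ofReal hst) hx

lemma level_empty (f : ℝ → ℝ≥0∞) (hf1 : ∀ x, f x ≤ 1) (t : ℝ) (ht : 1 ≤ t) :
    volume {x | ENNReal.ofReal t < f x} = 0 := by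
  convert measure_empty (μ := (volume : Measure ℝ))
  ext x
  simp only [mem_setOf_eq, mem_empty_iff_false, iff_false, not_lt]
  exact le_trans (hf1 x) (by simpa using ENNReal.ofReal_le_ofReal ht)

lemma pl_one_core (f g h : ℝ → ℝ≥0∞) (hf : Measurable f) (hg : Measurable g)
    (hh : Measurable h)
    (hf1 : ∀ x, f x ≤ 1) (hg1 : ∀ y, g y ≤ 1) (hh1 : ∀ z, h z ≤ 1)
    (hfs : ∀ t : ℝ, 0 < t → t < 1 → ∃ x, ENNReal.ofReal t < f x)
    (hgs : ∀ t : ℝ, 0 < t → t < 1 → ∃ y, ENNReal.ofReal t < g y)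
    (hyp : ∀ x y, f x * g y ≤ h ((x + y) / 2) ^ 2) :
    (∫⁻ x, f x) + ∫⁻ y, g y ≤ 2 * ∫⁻ z, h z := by
  rw [layer f hf hf1, layer g hg hg1, layer h hh hh1]
  rw [← lintegral_add_left (meas_level_antitone f) _]
  rw [← lintegral_const_mul 2 (meas_level_antitone h)]
  refine setLIntegral_mono ((meas_level_antitone h).const_mul 2) fun t ht => ?_
  rcases lt_or_ge t 1 with ht1 | ht1
  · -- main case
    have ht0 : (0:ℝ) < t := ht
    obtain ⟨x₀, hx₀⟩ := hfs t ht0 ht1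
    obtain ⟨y₀, hy₀⟩ := hgs t ht0 ht1
    refine onedim_mid _ _ _ (hf measurableSet_Ioi) (hg measurableSet_Ioi) ⟨x₀, hx₀⟩ ⟨y₀, hy₀⟩ fun a ha b hb => ?_
    simp only [mem_setOf_eq] at ha hb ⊢
    by_contra hcon
    push_neg at hcon
    have h2 : h ((a + b) / 2) ^ 2 ≤ ENNReal.ofReal t ^ 2 := pow_le_pow_left' hcon 2
    have h3 : ENNReal.ofReal t ^ 2 < f a * g b := by
      rw [sq]
      exact ENNReal.mul_lt_mul ha hb
    exact absurd (hyp a b) (not_le.mpr (lt_of_le_of_lt h2 (lt_of_lt_of_le h3 le_rfl)))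
  · rw [level_empty f hf1 t ht1, level_empty g hg1 t ht1, zero_add]
    exact le_trans zero_le le_rfl


lemma ennreal_amgm (x y : ℝ≥0∞) : x * y ≤ ((x + y) / 2) ^ 2 := by
  rcases eq_or_ne x ∞ with rfl | hx
  · rcases eq_or_ne y 0 with rfl | hy
    · simp
    · have : ((∞ + y) / 2 : ℝ≥0∞) = ∞ := by simp [ENNReal.top_div]
      rw [this]
      simp [pow_two]
  rcases eq_or_ne y ∞ with rfl | hy
  · rcases eq_or_ne x 0 with rfl | hx0
    · simp
    · have : ((x + ∞) / 2 : ℝ≥0∞) = ∞ := by simp [ENNReal.top_div]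
      rw [this]
      simp [pow_two]
  · lift x to ℝ≥0 using hx
    lift y to ℝ≥0 using hy
    have h2 : ((x:ℝ≥0∞) + y) / 2 = ((x + y) / 2 : ℝ≥0) := by
      rw [← ENNReal.coe_add, ENNReal.coe_div (by norm_num)]
      norm_num
    rw [h2, ← ENNReal.coe_mul, ← ENNReal.coe_pow, ENNReal.coe_le_coe]
    rw [← NNReal.coe_le_coe]
    push_cast
    nlinarith [NNReal.coe_nonneg x, NNReal.coe_nonneg y, sq_nonneg ((x:ℝ) - y)]

lemma pl_one_bdd (f g h : ℝ → ℝ≥0∞) (hf : Measurable f) (hg : Measurable g)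
    (hh : Measurable h) (N : ℝ≥0∞) (hN : N ≠ ∞)
    (hfN : ∀ x, f x ≤ N) (hgN : ∀ y, g y ≤ N)
    (hyp : ∀ x y, f x * g y ≤ h ((x + y) / 2) ^ 2) :
    (∫⁻ x, f x) * ∫⁻ y, g y ≤ (∫⁻ z, h z) ^ 2 := by
  set a := ⨆ x, f x with ha
  set b := ⨆ y, g y with hb
  rcases eq_or_ne a 0 with ha0 | ha0
  · have : ∀ x, f x = 0 := fun x => le_antisymm (ha0 ▸ le_iSup f x) zero_le
    simp [this]
  rcases eq_or_ne b 0 with hb0 | hb0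
  · have : ∀ y, g y = 0 := fun y => le_antisymm (hb0 ▸ le_iSup g y) zero_le
    simp [this]
  have haT : a ≠ ∞ := ne_top_of_le_ne_top hN (iSup_le hfN)
  have hbT : b ≠ ∞ := ne_top_of_le_ne_top hN (iSup_le hgN)
  set c := (a * b) ^ ((2:ℝ)⁻¹) with hc
  have hc2 : c ^ (2:ℕ) = a * b := by
    rw [hc, ← ENNReal.rpow_natCast, ← ENNReal.rpow_mul]
    norm_num
  have hc0 : c ≠ 0 := by
    rw [hc]
    simp only [ne_eq, ENNReal.rpow_eq_zero_iff, not_or, not_and_or]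
    constructor
    · left; exact mul_ne_zero ha0 hb0
    · left; exact ENNReal.mul_ne_top haT hbT
  have hcT : c ≠ ∞ := by
    rw [hc]
    simp only [ne_eq, ENNReal.rpow_eq_top_iff, not_or, not_and_or]
    constructor
    · left; exact mul_ne_zero ha0 hb0
    · left; exact ENNReal.mul_ne_top haT hbT
  set f' := fun x => a⁻¹ * f x with hf'
  set g' := fun y => b⁻¹ * g y with hg'
  set h' := fun z => (c⁻¹ * h z) ⊓ 1 with hh'
  have hsupf : (⨆ x, f' x) = 1 := by
    rw [hf']
    simp_rw [← ENNReal.mul_iSup, ← ha]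
    exact ENNReal.inv_mul_cancel ha0 haT
  have hsupg : (⨆ y, g' y) = 1 := by
    rw [hg']
    simp_rw [← ENNReal.mul_iSup, ← hb]
    exact ENNReal.inv_mul_cancel hb0 hbT
  have hf'1 : ∀ x, f' x ≤ 1 := fun x => hsupf ▸ le_iSup f' x
  have hg'1 : ∀ y, g' y ≤ 1 := fun y => hsupg ▸ le_iSup g' y
  have hh'1 : ∀ z, h' z ≤ 1 := fun z => inf_le_right
  have hyp' : ∀ x y, f' x * g' y ≤ h' ((x + y) / 2) ^ 2 := by
    intro x y
    have e1 : f' x * g' y = (a * b)⁻¹ * (f x * g y) := by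
      rw [hf', hg', ENNReal.mul_inv (Or.inl ha0) (Or.inl haT)]
      ring
    have key1 : f' x * g' y ≤ (c⁻¹ * h ((x+y)/2)) ^ 2 := by
      rw [e1, mul_pow, ← ENNReal.inv_pow, hc2]
      exact mul_le_mul_right (hyp x y) _
    have key2 : f' x * g' y ≤ 1 := by
      calc f' x * g' y ≤ 1 * 1 := mul_le_mul' (hf'1 x) (hg'1 y)
        _ = 1 := one_mul 1
    have heq : h' ((x+y)/2) ^ 2 = ((c⁻¹ * h ((x+y)/2)) ^ 2) ⊓ 1 := by
      show ((c⁻¹ * h ((x+y)/2)) ⊓ 1) ^ 2 = _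
      rcases le_total (c⁻¹ * h ((x+y)/2)) 1 with hle | hle
      · rw [inf_eq_left.mpr hle, inf_eq_left.mpr (by
          calc (c⁻¹ * h ((x+y)/2))^2 ≤ 1^2 := pow_le_pow_left' hle 2
            _ = 1 := one_pow 2)]
      · rw [inf_eq_right.mpr hle, inf_eq_right.mpr (by
          calc (1:ℝ≥0∞) = 1^2 := (one_pow 2).symm
            _ ≤ (c⁻¹ * h ((x+y)/2))^2 := pow_le_pow_left' hle 2), one_pow]
    rw [heq]
    exact le_inf key1 key2
  have hfs : ∀ t : ℝ, 0 < t → t < 1 → ∃ x, ENNReal.ofReal t < f' x := by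
    intro t ht0 ht1
    have : ENNReal.ofReal t < 1 := by
      rw [← ENNReal.ofReal_one]
      exact ENNReal.ofReal_lt_ofReal_iff_of_nonneg (le_of_lt ht0) |>.mpr ht1
    rw [← hsupf] at this
    exact lt_iSup_iff.mp this
  have hgs : ∀ t : ℝ, 0 < t → t < 1 → ∃ y, ENNReal.ofReal t < g' y := by
    intro t ht0 ht1
    have : ENNReal.ofReal t < 1 := by
      rw [← ENNReal.ofReal_one]
      exact ENNReal.ofReal_lt_ofReal_iff_of_nonneg (le_of_lt ht0) |>.mpr ht1
    rw [← hsupg] at this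
    exact lt_iSup_iff.mp this
  have hf'm : Measurable f' := hf.const_mul _
  have hg'm : Measurable g' := hg.const_mul _
  have hh'm : Measurable h' := (hh.const_mul _).inf measurable_const
  have core := pl_one_core f' g' h' hf'm hg'm hh'm hf'1 hg'1 hh'1 hfs hgs hyp'
  -- deduce product bound
  have step : (∫⁻ x, f' x) * ∫⁻ y, g' y ≤ (∫⁻ z, h' z) ^ 2 := by
    calc (∫⁻ x, f' x) * ∫⁻ y, g' y ≤ (((∫⁻ x, f' x) + ∫⁻ y, g' y) / 2) ^ 2 := ennreal_amgm _ _
      _ ≤ (∫⁻ z, h' z) ^ 2 := by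
          gcongr
          rw [ENNReal.div_le_iff (by norm_num) (by norm_num)]
          rw [mul_comm]
          exact core
  have hint_f : ∫⁻ x, f' x = a⁻¹ * ∫⁻ x, f x := lintegral_const_mul _ hf
  have hint_g : ∫⁻ y, g' y = b⁻¹ * ∫⁻ y, g y := lintegral_const_mul _ hg
  have hint_h : ∫⁻ z, h' z ≤ c⁻¹ * ∫⁻ z, h z := by
    calc ∫⁻ z, h' z ≤ ∫⁻ z, c⁻¹ * h z := lintegral_mono fun z => inf_le_left
      _ = c⁻¹ * ∫⁻ z, h z := lintegral_const_mul _ hh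
  rw [hint_f, hint_g] at step
  have step2 : (a*b)⁻¹ * ((∫⁻ x, f x) * ∫⁻ y, g y) ≤ (a*b)⁻¹ * (∫⁻ z, h z) ^ 2 := by
    calc (a*b)⁻¹ * ((∫⁻ x, f x) * ∫⁻ y, g y)
        = (a⁻¹ * ∫⁻ x, f x) * (b⁻¹ * ∫⁻ y, g y) := by
          rw [ENNReal.mul_inv (Or.inl ha0) (Or.inl haT)]; ring
      _ ≤ (∫⁻ z, h' z) ^ 2 := step
      _ ≤ (c⁻¹ * ∫⁻ z, h z) ^ 2 := pow_le_pow_left' hint_h 2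
      _ = (a*b)⁻¹ * (∫⁻ z, h z) ^ 2 := by
          rw [mul_pow, ← ENNReal.inv_pow, hc2]
  exact (ENNReal.mul_le_mul_iff_right (ENNReal.inv_ne_zero.mpr (ENNReal.mul_ne_top haT hbT))
    (ENNReal.inv_ne_top.mpr (mul_ne_zero ha0 hb0))).mp step2

lemma pl_one (f g h : ℝ → ℝ≥0∞) (hf : Measurable f) (hg : Measurable g)
    (hh : Measurable h)
    (hyp : ∀ x y, f x * g y ≤ h ((x + y) / 2) ^ 2) :
    (∫⁻ x, f x) * ∫⁻ y, g y ≤ (∫⁻ z, h z) ^ 2 := by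
  have key : ∀ n : ℕ, (∫⁻ x, f x ⊓ (n:ℝ≥0∞)) * ∫⁻ y, g y ⊓ (n:ℝ≥0∞) ≤ (∫⁻ z, h z) ^ 2 := by
    intro n
    refine pl_one_bdd _ _ h (hf.inf measurable_const) (hg.inf measurable_const) hh
      n (by simp) (fun x => inf_le_right) (fun y => inf_le_right) fun x y => ?_
    calc (f x ⊓ (n:ℝ≥0∞)) * (g y ⊓ (n:ℝ≥0∞)) ≤ f x * g y := mul_le_mul' inf_le_left inf_le_left
      _ ≤ h ((x+y)/2) ^ 2 := hyp x y
  have hfm : ∀ (f : ℝ → ℝ≥0∞), Measurable f → ∀ n : ℕ,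
      Measurable fun x => f x ⊓ (n:ℝ≥0∞) := fun f hf n => hf.inf measurable_const
  have hmono : ∀ (f : ℝ → ℝ≥0∞), Monotone fun (n:ℕ) => fun x => f x ⊓ (n:ℝ≥0∞) := by
    intro f n m hnm x
    exact inf_le_inf le_rfl (by exact_mod_cast Nat.cast_le.mpr hnm)
  have hsup : ∀ (f : ℝ → ℝ≥0∞) (x : ℝ), (⨆ n : ℕ, f x ⊓ (n:ℝ≥0∞)) = f x := by
    intro f x
    refine le_antisymm (iSup_le fun n => inf_le_left) ?_
    rcases eq_or_ne (f x) ∞ with hfx | hfx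
    · simp only [hfx, top_inf_eq, ENNReal.iSup_natCast, le_refl]
    · obtain ⟨n, hn⟩ := ENNReal.exists_nat_gt hfx
      refine le_iSup_of_le n ?_
      rw [inf_eq_left.mpr (le_of_lt hn)]
  have hif : ∫⁻ x, f x = ⨆ n : ℕ, ∫⁻ x, f x ⊓ (n:ℝ≥0∞) := by
    conv_lhs => rw [show f = fun x => ⨆ n : ℕ, f x ⊓ (n:ℝ≥0∞) by
      funext x; rw [hsup f x]]
    exact lintegral_iSup (hfm f hf) (hmono f)
  have hig : ∫⁻ y, g y = ⨆ n : ℕ, ∫⁻ y, g y ⊓ (n:ℝ≥0∞) := by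
    conv_lhs => rw [show g = fun y => ⨆ n : ℕ, g y ⊓ (n:ℝ≥0∞) by
      funext y; rw [hsup g y]]
    exact lintegral_iSup (hfm g hg) (hmono g)
  rw [hif, hig, ENNReal.iSup_mul]
  refine iSup_le fun n => ?_
  rw [ENNReal.mul_iSup]
  refine iSup_le fun m => ?_
  calc (∫⁻ x, f x ⊓ (n:ℝ≥0∞)) * ∫⁻ y, g y ⊓ (m:ℝ≥0∞)
      ≤ (∫⁻ x, f x ⊓ ((n ⊔ m : ℕ):ℝ≥0∞)) * ∫⁻ y, g y ⊓ ((n ⊔ m : ℕ):ℝ≥0∞) := by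
        gcongr
        · exact le_max_left n m
        · exact le_max_right n m
    _ ≤ (∫⁻ z, h z) ^ 2 := key (n ⊔ m)


lemma cons_mid (n : ℕ) (t s : ℝ) (w v : Fin n → ℝ) :
    (Fin.cons t w + Fin.cons s v) / 2 = (Fin.cons ((t+s)/2) ((w+v)/2) : Fin (n+1) → ℝ) := by
  funext j
  refine Fin.cases ?_ ?_ j
  · simp
  · intro k; simp

lemma pl_pi : ∀ (n : ℕ) (f g h : (Fin n → ℝ) → ℝ≥0∞), Measurable f → Measurable g →
    Measurable h → (∀ x y, f x * g y ≤ h ((x + y) / 2) ^ 2) →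
    (∫⁻ x, f x) * ∫⁻ y, g y ≤ (∫⁻ z, h z) ^ 2 := by
  intro n
  induction n with
  | zero =>
    intro f g h hf hg hh hyp
    set p : Fin 0 → ℝ := fun a => isEmptyElim a with hp
    have hvol : (volume : Measure (Fin 0 → ℝ)) = Measure.dirac p := by
      rw [volume_pi, Measure.pi_of_empty]
    rw [hvol, lintegral_dirac, lintegral_dirac, lintegral_dirac]
    have := hyp p p
    rwa [show ((p + p) / 2 : Fin 0 → ℝ) = p from Subsingleton.elim _ _] at this
  | succ n ih =>
    intro f g h hf hg hh hyp
    set e := MeasurableEquiv.piFinSuccAbove (fun _ : Fin (n+1) => ℝ) 0 with he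
    have hmp : MeasurePreserving e volume volume := volume_preserving_piFinSuccAbove _ 0
    have hsymm : MeasurePreserving e.symm volume volume := hmp.symm e
    have hesymm : ∀ (t : ℝ) (w : Fin n → ℝ), e.symm (t, w) = Fin.cons t w := by
      intro t w
      show (MeasurableEquiv.piFinSuccAbove (fun _ : Fin (n+1) => ℝ) 0).symm (t, w) = _
      rw [MeasurableEquiv.piFinSuccAbove_symm_apply]
      exact Fin.insertNth_zero' t w
    have key : ∀ (f : (Fin (n+1) → ℝ) → ℝ≥0∞), Measurable f →
        ∫⁻ x, f x = ∫⁻ t : ℝ, ∫⁻ w : Fin n → ℝ, f (e.symm (t, w)) := by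
      intro f hf
      have h1 : ∫⁻ x, f x = ∫⁻ p, f (e.symm p) := (hsymm.lintegral_comp hf).symm
      rw [h1, Measure.volume_eq_prod, lintegral_prod (fun p => f (e.symm p)) ((hf.comp e.symm.measurable).aemeasurable)]
    have hFm : Measurable fun t : ℝ => ∫⁻ w, f (e.symm (t, w)) :=
      Measurable.lintegral_prod_right (hf.comp e.symm.measurable)
    have hGm : Measurable fun s : ℝ => ∫⁻ v, g (e.symm (s, v)) :=
      Measurable.lintegral_prod_right (hg.comp e.symm.measurable)
    have hHm : Measurable fun u : ℝ => ∫⁻ z, h (e.symm (u, z)) :=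
      Measurable.lintegral_prod_right (hh.comp e.symm.measurable)
    have hFG : ∀ t s : ℝ, (∫⁻ w, f (e.symm (t, w))) * ∫⁻ v, g (e.symm (s, v)) ≤
        (∫⁻ z, h (e.symm ((t + s) / 2, z))) ^ 2 := by
      intro t s
      refine ih (fun w => f (e.symm (t, w))) (fun v => g (e.symm (s, v)))
        (fun z => h (e.symm ((t+s)/2, z)))
        (hf.comp (e.symm.measurable.comp measurable_prodMk_left))
        (hg.comp (e.symm.measurable.comp measurable_prodMk_left))
        (hh.comp (e.symm.measurable.comp measurable_prodMk_left)) fun w v => ?_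
      have : (e.symm (t, w) + e.symm (s, v)) / 2 = e.symm ((t + s) / 2, (w + v) / 2) := by
        rw [hesymm, hesymm, hesymm]
        exact cons_mid n t s w v
      calc f (e.symm (t, w)) * g (e.symm (s, v))
          ≤ h ((e.symm (t, w) + e.symm (s, v)) / 2) ^ 2 := hyp _ _
        _ = h (e.symm ((t + s) / 2, (w + v) / 2)) ^ 2 := by rw [this]
    rw [key f hf, key g hg, key h hh]
    exact pl_one _ _ _ hFm hGm hHm hFG


lemma euclid_mid (d : ℕ) (A B C : Set (EuclideanSpace ℝ (Fin d)))
    (hA : MeasurableSet A) (hB : MeasurableSet B) (hC : MeasurableSet C)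
    (hmid : ∀ a ∈ A, ∀ b ∈ B, (2⁻¹ : ℝ) • (a + b) ∈ C) :
    volume A * volume B ≤ volume C ^ 2 := by
  set e := (MeasurableEquiv.toLp 2 (Fin d → ℝ)).symm with he
  have hmp : MeasurePreserving e volume volume :=
    EuclideanSpace.volume_preserving_symm_measurableEquiv_toLp (Fin d)
  have hsymm : MeasurePreserving e.symm volume volume := hmp.symm e
  set A' := e.symm ⁻¹' A with hA'
  set B' := e.symm ⁻¹' B with hB'
  set C' := e.symm ⁻¹' C with hC'
  have hA'm : MeasurableSet A' := e.symm.measurable hA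
  have hB'm : MeasurableSet B' := e.symm.measurable hB
  have hC'm : MeasurableSet C' := e.symm.measurable hC
  have hvolA : volume A' = volume A := hsymm.measure_preimage hA.nullMeasurableSet
  have hvolB : volume B' = volume B := hsymm.measure_preimage hB.nullMeasurableSet
  have hvolC : volume C' = volume C := hsymm.measure_preimage hC.nullMeasurableSet
  have hlin : ∀ x y : Fin d → ℝ, (e.symm ((x + y) / 2) : EuclideanSpace ℝ (Fin d))
      = (2⁻¹ : ℝ) • (e.symm x + e.symm y) := by
    intro x y
    ext i
    show (x i + y i) / 2 = 2⁻¹ * (x i + y i)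
    ring
  have key := pl_pi d (A'.indicator 1) (B'.indicator 1) (C'.indicator 1)
    (measurable_one.indicator hA'm) (measurable_one.indicator hB'm)
    (measurable_one.indicator hC'm) ?_
  · rwa [lintegral_indicator_one hA'm, lintegral_indicator_one hB'm,
      lintegral_indicator_one hC'm, hvolA, hvolB, hvolC] at key
  · intro x y
    by_cases hx : x ∈ A'
    · by_cases hy : y ∈ B'
      · have hxy : (x + y) / 2 ∈ C' := by
          show e.symm ((x + y) / 2) ∈ C
          rw [hlin]
          exact hmid _ hx _ hy
        simp [indicator_of_mem hx, indicator_of_mem hy, indicator_of_mem hxy]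
      · simp [indicator_of_notMem hy]
    · simp [indicator_of_notMem hx]


theorem stmt_2 (d : ℕ) (hd : 1 ≤ d)
    (ν : Measure (EuclideanSpace ℝ (Fin d)))
    (hν : ν = (volume (Metric.closedBall (0 : EuclideanSpace ℝ (Fin d)) 1))⁻¹ •
      volume.restrict (Metric.closedBall (0 : EuclideanSpace ℝ (Fin d)) 1))
    (B : Set (EuclideanSpace ℝ (Fin d))) (hB : MeasurableSet B)
    (hBsub : B ⊆ Metric.closedBall (0 : EuclideanSpace ℝ (Fin d)) 1)
    (hhalf : (1 : ℝ≥0∞) / 2 ≤ ν B)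
    (ε : ℝ) (hε : 0 < ε) (hε2 : ε ≤ 2) :
    1 - (1 / (ν B).toReal) * (1 - (1 - Real.sqrt (1 - ε ^ 2 / 4))) ^ (2 * d) ≤
      (ν (Metric.thickening ε B)).toReal := by
  set C : Set (EuclideanSpace ℝ (Fin d)) := Metric.closedBall 0 1 with hCdef
  set T : Set (EuclideanSpace ℝ (Fin d)) := Metric.thickening ε B with hTdef
  set A : Set (EuclideanSpace ℝ (Fin d)) := C \ T with hAdef
  set r : ℝ := Real.sqrt (1 - ε ^ 2 / 4) with hrdef
  have hsq : 0 ≤ 1 - ε ^ 2 / 4 := by nlinarith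
  have hr0 : 0 ≤ r := Real.sqrt_nonneg _
  have hr2 : r ^ 2 = 1 - ε ^ 2 / 4 := Real.sq_sqrt hsq
  have hAm : MeasurableSet A :=
    measurableSet_closedBall.diff Metric.isOpen_thickening.measurableSet
  have hTm : MeasurableSet T := Metric.isOpen_thickening.measurableSet
  -- geometric midpoint fact
  have hmid : ∀ a ∈ A, ∀ b ∈ B, (2⁻¹ : ℝ) • (a + b) ∈
      Metric.closedBall (0 : EuclideanSpace ℝ (Fin d)) r := by
    intro a ha b hb
    have ha1 : ‖a‖ ≤ 1 := by
      have h1 := ha.1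
      rwa [hCdef, Metric.mem_closedBall, dist_zero_right] at h1
    have hb1 : ‖b‖ ≤ 1 := by
      have h1 := hBsub hb
      rwa [hCdef, Metric.mem_closedBall, dist_zero_right] at h1
    have hdist : ε ≤ dist a b := by
      by_contra hcon
      push_neg at hcon
      exact ha.2 (Metric.mem_thickening_iff.mpr ⟨b, hb, hcon⟩)
    have hab : ε ≤ ‖a - b‖ := by rwa [← dist_eq_norm]
    have hpar := parallelogram_law_with_norm ℝ a b
    have hsum : ‖a + b‖ * ‖a + b‖ ≤ 4 - ε ^ 2 := by
      nlinarith [norm_nonneg (a - b), norm_nonneg a, norm_nonneg b]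
    rw [Metric.mem_closedBall, dist_zero_right, norm_smul, Real.norm_eq_abs,
      show |(2:ℝ)⁻¹| = 2⁻¹ by norm_num]
    have hng : (2⁻¹ : ℝ) * ‖a + b‖ ≥ 0 := by positivity
    have hsq2 : ((2⁻¹ : ℝ) * ‖a + b‖) ^ 2 ≤ r ^ 2 := by
      rw [hr2]; nlinarith
    nlinarith [Real.sqrt_nonneg (1 - ε ^ 2 / 4)]
  -- Brunn–Minkowski style bound
  have key : volume A * volume B ≤ volume (Metric.closedBall (0 : EuclideanSpace ℝ (Fin d)) r) ^ 2 :=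
    euclid_mid d A B _ hAm hB measurableSet_closedBall hmid
  have hballr : volume (Metric.closedBall (0 : EuclideanSpace ℝ (Fin d)) r)
      = ENNReal.ofReal (r ^ d) * volume C := by
    rw [Measure.addHaar_closedBall' volume 0 hr0]
    congr 2
    simp [finrank_euclideanSpace_fin]
  rw [hballr] at key
  set V : ℝ≥0∞ := volume C with hVdef
  have hV0 : V ≠ 0 := by
    have := Metric.measure_closedBall_pos (volume : Measure (EuclideanSpace ℝ (Fin d))) 0 one_pos
    exact this.ne'
  have hVT : V ≠ ∞ := measure_closedBall_lt_top.ne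
  have hcover : V ≤ volume A + volume (T ∩ C) := by
    refine le_trans (measure_mono ?_) (measure_union_le _ _)
    intro x hx
    by_cases hxT : x ∈ T
    · exact Or.inr ⟨hxT, hx⟩
    · exact Or.inl ⟨hx, hxT⟩
  have hμAle : volume A ≤ V := measure_mono diff_subset
  have hμBle : volume B ≤ V := measure_mono hBsub
  have hμTle : volume (T ∩ C) ≤ V := measure_mono inter_subset_right
  have hμAT : volume A ≠ ∞ := (lt_of_le_of_lt hμAle hVT.lt_top).ne
  have hμBT : volume B ≠ ∞ := (lt_of_le_of_lt hμBle hVT.lt_top).ne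
  have hμTT : volume (T ∩ C) ≠ ∞ := (lt_of_le_of_lt hμTle hVT.lt_top).ne
  -- ν values
  have hνB : ν B = V⁻¹ * volume B := by
    rw [hν, Measure.smul_apply, smul_eq_mul, Measure.restrict_apply hB,
      inter_eq_self_of_subset_left hBsub]
  have hνT : ν T = V⁻¹ * volume (T ∩ C) := by
    rw [hν, Measure.smul_apply, smul_eq_mul, Measure.restrict_apply hTm]
  have hμB0 : volume B ≠ 0 := by
    intro h0
    rw [hνB, h0, mul_zero] at hhalf
    simp at hhalf
  -- pass to reals
  set v : ℝ := V.toReal with hvdef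
  set vA : ℝ := (volume A).toReal with hvAdef
  set vB : ℝ := (volume B).toReal with hvBdef
  set vT : ℝ := (volume (T ∩ C)).toReal with hvTdef
  have hv0 : 0 < v := ENNReal.toReal_pos hV0 hVT
  have hvB0 : 0 < vB := ENNReal.toReal_pos hμB0 hμBT
  have hvA0 : 0 ≤ vA := ENNReal.toReal_nonneg
  have hvT0 : 0 ≤ vT := ENNReal.toReal_nonneg
  have h1 : vA * vB ≤ r ^ (2 * d) * v ^ 2 := by
    have hfin : (ENNReal.ofReal (r ^ d) * V) ^ 2 ≠ ∞ := by
      apply ENNReal.pow_ne_top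
      exact ENNReal.mul_ne_top ENNReal.ofReal_ne_top hVT
    have := ENNReal.toReal_mono hfin key
    rw [ENNReal.toReal_mul] at this
    rw [ENNReal.toReal_pow, ENNReal.toReal_mul, ENNReal.toReal_ofReal (by positivity)] at this
    calc vA * vB ≤ (r ^ d * v) ^ 2 := this
      _ = r ^ (2 * d) * v ^ 2 := by rw [mul_pow, ← pow_mul, mul_comm d 2]
  have h2 : v ≤ vA + vT := by
    have hfin : volume A + volume (T ∩ C) ≠ ∞ := ENNReal.add_ne_top.mpr ⟨hμAT, hμTT⟩
    have := ENNReal.toReal_mono hfin hcover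
    rwa [ENNReal.toReal_add hμAT hμTT] at this
  -- compute the goal in real terms
  have hνBr : (ν B).toReal = v⁻¹ * vB := by
    rw [hνB, ENNReal.toReal_mul, ENNReal.toReal_inv]
  have hνTr : (ν T).toReal = v⁻¹ * vT := by
    rw [hνT, ENNReal.toReal_mul, ENNReal.toReal_inv]
  rw [hνBr, hνTr, show (1 : ℝ) - (1 - Real.sqrt (1 - ε ^ 2 / 4)) = r by rw [hrdef]; ring]
  have hone : 1 / (v⁻¹ * vB) = v / vB := by
    field_simp
  rw [hone]
  set R : ℝ := r ^ (2 * d) with hRdef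
  have hR0 : 0 ≤ R := by positivity
  have hAbound : vA ≤ R * v ^ 2 / vB := by
    rw [le_div_iff₀ hvB0]
    exact h1
  have hkey2 : v * (1 - v / vB * R) ≤ vT := by
    have hexp : v * (1 - v / vB * R) = v - R * v ^ 2 / vB := by
      field_simp
    rw [hexp]
    linarith
  have : (1 - v / vB * R) ≤ vT / v := by
    rw [le_div_iff₀ hv0, mul_comm]
    exact hkey2
  calc 1 - v / vB * R ≤ vT / v := this
    _ = v⁻¹ * vT := by rw [div_eq_inv_mul]
end

section
/- Let d ≥ 1, let B^d be the closed Euclidean unit ball in ℝ^d, and let ν_d be the uniform probability measure on B^d. For every Borel set B ⊆ B^d with ν_d(B) ≥ 1/2 and every ε ∈ (0, 2], the open Euclidean ε-neighborhood B_ε satisfies ν_d(B_ε) ≥ 1 − (1/ν_d(B)) · e^{−2d·((2−√3)/3)·ε²}. -/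
open MeasureTheory Real
open scoped ENNReal

/-!
The Prékopa–Leindler inequality with weight `1/2` holds for Lebesgue measure on `ℝ`: by the
layer-cake formula it reduces to the one-dimensional Brunn–Minkowski inequality
`|A| + |C| ≤ 2 |(A + C) / 2|` once `f` and `g` are rescaled to have equal suprema. It tensorises
over coordinates, and for indicators it gives `|B| |C| ≤ |(B + C) / 2|²`. If every point of `C`
is at distance at least `ε` from `B`, and both lie in the unit ball, then the parallelogram law puts
`(B + C) / 2` in the ball of radius `√(1 - ε² / 4)`. With `C` the complement of `B_ε` this gives
`ν(B) (1 - ν(B_ε)) ≤ (1 - ε² / 4)^d ≤ exp (-d ε² / 4)`, which is stronger than the claim because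
`8 (2 - √3) / 3 ≤ 1`.
-/

open Set
open scoped NNReal

section

variable {E F : Type*} [AddCommGroup E] [Module ℝ E] [MeasurableSpace E]
  [AddCommGroup F] [Module ℝ F] [MeasurableSpace F]

/-- The Prékopa–Leindler inequality for `λ = 1/2`, squared to avoid square roots. -/
def MidpointPrekopaLeindler (μ : Measure E) : Prop :=
  ∀ f g h : E → ℝ≥0∞, Measurable f → Measurable g → Measurable h →
    (∀ x y, f x * g y ≤ h ((2⁻¹ : ℝ) • (x + y)) ^ 2) →
      (∫⁻ x, f x ∂μ) * ∫⁻ x, g x ∂μ ≤ (∫⁻ x, h x ∂μ) ^ 2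

namespace MidpointPrekopaLeindler

theorem of_subsingleton [Subsingleton E] (μ : Measure E) : MidpointPrekopaLeindler μ := by
  intro f g h _ _ _ H
  have : Unique E := uniqueOfSubsingleton 0
  simp only [lintegral_unique]
  calc f default * μ univ * (g default * μ univ)
      = f default * g default * μ univ ^ 2 := by ring
    _ ≤ h default ^ 2 * μ univ ^ 2 := by
        gcongr
        simpa only [Subsingleton.elim ((2⁻¹ : ℝ) • (default + default : E)) default] using
          H default default
    _ = (h default * μ univ) ^ 2 := by ring

theorem of_measurePreserving {μ : Measure E} {ν : Measure F} (hμ : MidpointPrekopaLeindler μ)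
    {e : E → F} (he : MeasurePreserving e μ ν)
    (he_mid : ∀ x y, e ((2⁻¹ : ℝ) • (x + y)) = (2⁻¹ : ℝ) • (e x + e y)) :
    MidpointPrekopaLeindler ν := by
  intro f g h hf hg hh H
  rw [← he.lintegral_comp hf, ← he.lintegral_comp hg, ← he.lintegral_comp hh]
  refine hμ _ _ _ (hf.comp he.measurable) (hg.comp he.measurable) (hh.comp he.measurable)
    fun x y => ?_
  simpa only [Function.comp_apply, he_mid] using H (e x) (e y)

theorem prod {μ : Measure E} {ν : Measure F} [SFinite ν] (hμ : MidpointPrekopaLeindler μ)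
    (hν : MidpointPrekopaLeindler ν) : MidpointPrekopaLeindler (μ.prod ν) := by
  intro f g h hf hg hh H
  rw [lintegral_prod _ hf.aemeasurable, lintegral_prod _ hg.aemeasurable,
    lintegral_prod _ hh.aemeasurable]
  refine hμ _ _ _ hf.lintegral_prod_right' hg.lintegral_prod_right' hh.lintegral_prod_right'
    fun x x' => hν _ _ _ (by fun_prop) (by fun_prop) (by fun_prop) fun y y' => ?_
  simpa using H (x, y) (x', y')

theorem measure_mul_measure_le_sq {μ : Measure E} (hμ : MidpointPrekopaLeindler μ)
    {A C S : Set E} (hA : MeasurableSet A) (hC : MeasurableSet C) (hS : MeasurableSet S)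
    (hmid : ∀ x ∈ A, ∀ y ∈ C, (2⁻¹ : ℝ) • (x + y) ∈ S) :
    μ A * μ C ≤ μ S ^ 2 := by
  have := hμ (A.indicator 1) (C.indicator 1) (S.indicator 1) (measurable_one.indicator hA)
    (measurable_one.indicator hC) (measurable_one.indicator hS) fun x y => ?_
  · simpa only [lintegral_indicator_one hA, lintegral_indicator_one hC,
      lintegral_indicator_one hS] using this
  by_cases hx : x ∈ A
  · by_cases hy : y ∈ C
    · rw [indicator_of_mem hx, indicator_of_mem hy, indicator_of_mem (hmid x hx y hy)]
      simp
    · simp [hy]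
  · simp [hx]

end MidpointPrekopaLeindler

end

theorem volume_restrict_Ioi_setOf_ofReal_lt (a : ℝ≥0∞) :
    volume.restrict (Ioi (0 : ℝ)) {t | ENNReal.ofReal t < a} = a := by
  rw [Measure.restrict_apply (measurableSet_lt ENNReal.measurable_ofReal measurable_const)]
  rcases eq_or_ne a ∞ with rfl | ha
  · simp
  · have : {t | ENNReal.ofReal t < a} ∩ Ioi 0 = Ioo 0 a.toReal := by
      ext t
      simp only [mem_inter_iff, mem_ofPred_eq, mem_Ioi, mem_Ioo]
      constructor
      · rintro ⟨ht, ht0⟩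
        exact ⟨ht0, (ENNReal.ofReal_lt_iff_lt_toReal ht0.le ha).1 ht⟩
      · rintro ⟨ht0, ht⟩
        exact ⟨(ENNReal.ofReal_lt_iff_lt_toReal ht0.le ha).2 ht, ht0⟩
    rw [this, Real.volume_Ioo, sub_zero, ENNReal.ofReal_toReal ha]

theorem lintegral_eq_lintegral_meas_ofReal_lt {α : Type*} [MeasurableSpace α] (μ : Measure α)
    [SFinite μ] {f : α → ℝ≥0∞} (hf : Measurable f) :
    ∫⁻ x, f x ∂μ = ∫⁻ t in Ioi (0 : ℝ), μ {x | ENNReal.ofReal t < f x} := by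
  set S := {p : α × ℝ | ENNReal.ofReal p.2 < f p.1}
  have hS : MeasurableSet S :=
    measurableSet_lt (ENNReal.measurable_ofReal.comp measurable_snd) (hf.comp measurable_fst)
  calc ∫⁻ x, f x ∂μ = ∫⁻ x, (∫⁻ t in Ioi (0 : ℝ), S.indicator 1 (x, t)) ∂μ := by
        refine lintegral_congr fun x => ?_
        rw [← volume_restrict_Ioi_setOf_ofReal_lt (f x), ← lintegral_indicator_one
          (measurableSet_lt ENNReal.measurable_ofReal measurable_const)]
        rfl
    _ = ∫⁻ t in Ioi (0 : ℝ), ∫⁻ x, S.indicator 1 (x, t) ∂μ :=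
        lintegral_lintegral_swap (measurable_one.indicator hS).aemeasurable
    _ = ∫⁻ t in Ioi (0 : ℝ), μ {x | ENNReal.ofReal t < f x} := by
        refine lintegral_congr fun t => ?_
        rw [← lintegral_indicator_one (measurableSet_lt measurable_const hf)]
        rfl

theorem Real.volume_preimage_two_mul_sub (s : Set ℝ) (b : ℝ) :
    volume ((fun y => 2 * y - b) ⁻¹' s) = 2⁻¹ * volume s := by
  change volume ((2 * ·) ⁻¹' ((· + -b) ⁻¹' s)) = _
  rw [Real.volume_preimage_mul_left two_ne_zero, measure_preimage_add_right,
    abs_inv, abs_two, ENNReal.ofReal_inv_of_pos two_pos, ENNReal.ofReal_ofNat]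

theorem Real.volume_add_volume_le_two_mul_of_isCompact {K L S : Set ℝ} (hK : IsCompact K)
    (hL : IsCompact L) (hK₀ : K.Nonempty) (hL₀ : L.Nonempty)
    (hmid : ∀ x ∈ K, ∀ y ∈ L, 2⁻¹ * (x + y) ∈ S) :
    volume K + volume L ≤ 2 * volume S := by
  -- `P` and `Q` are half-size copies of `K` and `L` inside `S`, on either side of `(a + b) / 2`
  set a := sSup K
  set b := sInf L
  set P := (fun y => 2 * y - b) ⁻¹' K
  set Q := (fun y => 2 * y - a) ⁻¹' L
  have hPS : P ⊆ S := fun y hy => by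
    simpa using hmid _ hy b (hL.sInf_mem hL₀)
  have hQS : Q ⊆ S := fun y hy => by
    simpa using hmid a (hK.sSup_mem hK₀) _ hy
  have hPQ : P ∩ Q ⊆ {2⁻¹ * (a + b)} := fun y ⟨hyP, hyQ⟩ => by
    have := le_csSup hK.bddAbove hyP
    have := csInf_le hL.bddBelow hyQ
    simp only [mem_singleton_iff]
    linarith
  have hQ : MeasurableSet Q := hL.measurableSet.preimage (by fun_prop)
  calc volume K + volume L = 2 * (volume P + volume Q) := by
        rw [Real.volume_preimage_two_mul_sub, Real.volume_preimage_two_mul_sub, mul_add,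
          ← mul_assoc, ← mul_assoc, ENNReal.mul_inv_cancel two_ne_zero ENNReal.ofNat_ne_top,
          one_mul, one_mul]
    _ = 2 * volume (P ∪ Q) := by
        rw [← measure_union_add_inter P hQ, measure_mono_null hPQ (measure_singleton _), add_zero]
    _ ≤ 2 * volume S := by gcongr; exact union_subset hPS hQS

theorem Real.volume_add_volume_le_two_mul_of_midpoint_mem {A C S : Set ℝ} (hA : MeasurableSet A)
    (hC : MeasurableSet C) (hA₀ : A.Nonempty) (hC₀ : C.Nonempty)
    (hmid : ∀ x ∈ A, ∀ y ∈ C, 2⁻¹ * (x + y) ∈ S) :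
    volume A + volume C ≤ 2 * volume S := by
  obtain ⟨x₀, hx₀⟩ := hA₀
  obtain ⟨y₀, hy₀⟩ := hC₀
  rw [hA.measure_eq_iSup_isCompact, hC.measure_eq_iSup_isCompact]
  simp only [iSup_and']
  refine ENNReal.biSup_add_biSup_le' ⟨∅, empty_subset _, isCompact_empty⟩
    ⟨∅, empty_subset _, isCompact_empty⟩ fun K ⟨hKA, hK⟩ L ⟨hLC, hL⟩ => ?_
  calc volume K + volume L ≤ volume (insert x₀ K) + volume (insert y₀ L) := by
        gcongr <;> exact subset_insert _ _
    _ ≤ 2 * volume S :=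
        Real.volume_add_volume_le_two_mul_of_isCompact (hK.insert x₀) (hL.insert y₀)
          (insert_nonempty _ _) (insert_nonempty _ _) fun x hx y hy =>
            hmid x (insert_subset hx₀ hKA hx) y (insert_subset hy₀ hLC hy)

theorem ENNReal.min_le_of_mul_le_sq {a b c : ℝ≥0∞} (h : a * b ≤ c ^ 2) : min a b ≤ c := by
  by_contra! hc
  exact (ENNReal.mul_lt_mul (lt_min_iff.1 hc).1 (lt_min_iff.1 hc).2).not_ge (sq c ▸ h)

theorem ENNReal.mul_le_sq_of_add_le_two_mul {a b c : ℝ≥0∞} (h : a + b ≤ 2 * c) :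
    a * b ≤ c ^ 2 := by
  rcases eq_or_ne c ∞ with rfl | hc
  · simp
  have hab : a + b ≠ ∞ := ne_top_of_le_ne_top (by finiteness) h
  lift a to ℝ≥0 using (ENNReal.add_ne_top.1 hab).1
  lift b to ℝ≥0 using (ENNReal.add_ne_top.1 hab).2
  lift c to ℝ≥0 using hc
  have h' : (a : ℝ) + b ≤ 2 * c := by exact_mod_cast h
  have : (a : ℝ) * b ≤ c ^ 2 := by nlinarith [sq_nonneg ((a : ℝ) - b)]
  exact_mod_cast this

theorem Real.lintegral_add_lintegral_le_two_mul {f g h : ℝ → ℝ≥0∞} (hf : Measurable f)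
    (hg : Measurable g) (hh : Measurable h) (hfg : ⨆ x, f x = ⨆ x, g x)
    (H : ∀ x y, min (f x) (g y) ≤ h (2⁻¹ * (x + y))) :
    (∫⁻ x, f x) + ∫⁻ x, g x ≤ 2 * ∫⁻ x, h x := by
  rw [lintegral_eq_lintegral_meas_ofReal_lt volume hf,
    lintegral_eq_lintegral_meas_ofReal_lt volume hg,
    lintegral_eq_lintegral_meas_ofReal_lt volume hh, ← lintegral_const_mul' _ _ (by simp)]
  refine (le_lintegral_add _ _).trans (setLIntegral_mono' measurableSet_Ioi fun t _ => ?_)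
  by_cases ht : ENNReal.ofReal t < ⨆ x, f x
  · have ht' : ENNReal.ofReal t < ⨆ x, g x := hfg ▸ ht
    exact Real.volume_add_volume_le_two_mul_of_midpoint_mem (measurableSet_lt measurable_const hf)
      (measurableSet_lt measurable_const hg) (lt_iSup_iff.1 ht) (lt_iSup_iff.1 ht')
      fun x hx y hy => (lt_min hx hy).trans_le (H x y)
  · have hf' : {x | ENNReal.ofReal t < f x} = ∅ :=
      eq_empty_of_forall_notMem fun x hx => ht (hx.trans_le (le_iSup f x))
    have hg' : {x | ENNReal.ofReal t < g x} = ∅ :=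
      eq_empty_of_forall_notMem fun x hx => ht (hfg ▸ hx.trans_le (le_iSup g x))
    simp [hf', hg']

theorem Real.lintegral_mul_lintegral_le_sq_of_iSup_ne_top {f g h : ℝ → ℝ≥0∞}
    (hf : Measurable f) (hg : Measurable g) (hh : Measurable h) (hf_top : ⨆ x, f x ≠ ∞)
    (hg_top : ⨆ x, g x ≠ ∞) (H : ∀ x y, f x * g y ≤ h (2⁻¹ * (x + y)) ^ 2) :
    (∫⁻ x, f x) * ∫⁻ x, g x ≤ (∫⁻ x, h x) ^ 2 := by
  rcases eq_or_ne (⨆ x, f x) 0 with hf0 | hf0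
  · simp [ENNReal.iSup_eq_zero.1 hf0]
  rcases eq_or_ne (⨆ x, g x) 0 with hg0 | hg0
  · simp [ENNReal.iSup_eq_zero.1 hg0]
  obtain ⟨a, ha⟩ : ∃ a : ℝ≥0, ⨆ x, f x = a := ⟨_, (ENNReal.coe_toNNReal hf_top).symm⟩
  obtain ⟨b, hb⟩ : ∃ b : ℝ≥0, ⨆ x, g x = b := ⟨_, (ENNReal.coe_toNNReal hg_top).symm⟩
  have ha0 : a ≠ 0 := by rintro rfl; exact hf0 (by simpa using ha)
  have hb0 : b ≠ 0 := by rintro rfl; exact hg0 (by simpa using hb)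
  -- rescale `f` by `b / c` and `g` by `a / c`, where `c ^ 2 = a * b`: the suprema become equal
  -- while the products `f x * g y` do not change
  set c := NNReal.sqrt (a * b)
  have hc : c * c = a * b := NNReal.mul_self_sqrt _
  have hc0 : c ≠ 0 := by positivity
  have hscale : ((b / c : ℝ≥0) : ℝ≥0∞) * (a / c : ℝ≥0) = 1 := by
    rw [← ENNReal.coe_mul, div_mul_div_comm, mul_comm b, ← hc, div_self (by positivity)]
    rfl
  have hsup : ((b / c : ℝ≥0) : ℝ≥0∞) * a = (a / c : ℝ≥0) * b := by
    rw [← ENNReal.coe_mul, ← ENNReal.coe_mul, div_mul_eq_mul_div, div_mul_eq_mul_div, mul_comm]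
  have key := Real.lintegral_add_lintegral_le_two_mul (hf.const_mul _) (hg.const_mul _) hh
    (by rw [← ENNReal.mul_iSup, ← ENNReal.mul_iSup, ha, hb, hsup])
    fun x y => ENNReal.min_le_of_mul_le_sq <| by
      rw [mul_mul_mul_comm, hscale, one_mul]; exact H x y
  rw [lintegral_const_mul' _ _ ENNReal.coe_ne_top, lintegral_const_mul' _ _ ENNReal.coe_ne_top]
    at key
  calc (∫⁻ x, f x) * ∫⁻ x, g x
      = ((b / c : ℝ≥0) * ∫⁻ x, f x) * ((a / c : ℝ≥0) * ∫⁻ x, g x) := by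
        rw [mul_mul_mul_comm, hscale, one_mul]
    _ ≤ (∫⁻ x, h x) ^ 2 := ENNReal.mul_le_sq_of_add_le_two_mul key

theorem Real.midpointPrekopaLeindler_volume : MidpointPrekopaLeindler (volume : Measure ℝ) := by
  intro f g h hf hg hh H
  have htrunc : ∀ k : ℝ → ℝ≥0∞, Measurable k → ∫⁻ x, k x = ⨆ N : ℕ, ∫⁻ x, min (k x) N :=
    fun k hk => by
      rw [← lintegral_iSup (fun N => hk.min measurable_const)
        fun N M hNM x => min_le_min_left _ (by exact_mod_cast hNM)]
      congr with x
      rw [← inf_iSup_eq, ENNReal.iSup_natCast, inf_top_eq]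
  rw [htrunc f hf, htrunc g hg, ENNReal.iSup_mul]
  refine iSup_le fun N => ?_
  rw [ENNReal.mul_iSup]
  refine iSup_le fun M => Real.lintegral_mul_lintegral_le_sq_of_iSup_ne_top
    (hf.min measurable_const) (hg.min measurable_const) hh
    (ne_top_of_le_ne_top (ENNReal.natCast_ne_top N) (iSup_le fun x => min_le_right _ _))
    (ne_top_of_le_ne_top (ENNReal.natCast_ne_top M) (iSup_le fun x => min_le_right _ _))
    fun x y => (mul_le_mul' (min_le_left _ _) (min_le_left _ _)).trans (H x y)

theorem midpointPrekopaLeindler_volume_pi :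
    ∀ n : ℕ, MidpointPrekopaLeindler (volume : Measure (Fin n → ℝ))
  | 0 => .of_subsingleton _
  | n + 1 => (Real.midpointPrekopaLeindler_volume.prod (midpointPrekopaLeindler_volume_pi n))
      |>.of_measurePreserving (volume_preserving_piFinSuccAbove (fun _ => ℝ) 0).symm
        fun x y => by
          ext i
          refine Fin.cases ?_ (fun j => ?_) i <;>
            simp [MeasurableEquiv.piFinSuccAbove_symm_apply, mul_add]

theorem midpointPrekopaLeindler_volume_euclideanSpace (n : ℕ) :
    MidpointPrekopaLeindler (volume : Measure (EuclideanSpace ℝ (Fin n))) :=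
  (midpointPrekopaLeindler_volume_pi n).of_measurePreserving
    (EuclideanSpace.volume_preserving_symm_measurableEquiv_toLp (Fin n)).symm fun x y => by
      simp

theorem norm_two_inv_smul_add_sq_le {E : Type*} [NormedAddCommGroup E] [InnerProductSpace ℝ E]
    {x y : E} {ε : ℝ} (hε : 0 ≤ ε) (hx : ‖x‖ ≤ 1) (hy : ‖y‖ ≤ 1) (hxy : ε ≤ ‖x - y‖) :
    ‖(2⁻¹ : ℝ) • (x + y)‖ ^ 2 ≤ 1 - ε ^ 2 / 4 := by
  have hpar := parallelogram_law_with_norm ℝ x y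
  rw [norm_smul, Real.norm_of_nonneg (by norm_num)]
  nlinarith [norm_nonneg x, norm_nonneg y, mul_self_le_mul_self hε hxy]

open ProbabilityTheory Metric in
theorem cond_closedBall_mul_cond_closedBall_le {d : ℕ} {A C : Set (EuclideanSpace ℝ (Fin d))}
    (hA : MeasurableSet A) (hC : MeasurableSet C) {ε : ℝ} (hε : 0 ≤ ε)
    (hsep : ∀ x ∈ A, ∀ y ∈ C, ε ≤ dist x y) :
    volume[|closedBall 0 1] A * volume[|closedBall 0 1] C ≤
      ENNReal.ofReal (1 - ε ^ 2 / 4) ^ d := by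
  set V := volume (closedBall (0 : EuclideanSpace ℝ (Fin d)) 1)
  have hV : V ≠ 0 := (measure_closedBall_pos _ _ one_pos).ne'
  have hV' : V ≠ ∞ := measure_closedBall_lt_top.ne
  have hBM := (midpointPrekopaLeindler_volume_euclideanSpace d).measure_mul_measure_le_sq
    ((measurableSet_closedBall (x := 0) (ε := 1)).inter hA)
    ((measurableSet_closedBall (x := 0) (ε := 1)).inter hC)
    (measurableSet_closedBall (x := 0) (ε := √(1 - ε ^ 2 / 4)))
    fun x ⟨hx, hxA⟩ y ⟨hy, hyC⟩ => by
      rw [mem_closedBall_zero_iff] at hx hy ⊢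
      exact Real.le_sqrt_of_sq_le (norm_two_inv_smul_add_sq_le hε hx hy
        (dist_eq_norm x y ▸ hsep x hxA y hyC))
  rw [Measure.addHaar_closedBall' _ _ (Real.sqrt_nonneg _), finrank_euclideanSpace_fin] at hBM
  rw [cond_apply measurableSet_closedBall, cond_apply measurableSet_closedBall]
  calc V⁻¹ * volume (closedBall 0 1 ∩ A) * (V⁻¹ * volume (closedBall 0 1 ∩ C))
      = V⁻¹ ^ 2 * (volume (closedBall 0 1 ∩ A) * volume (closedBall 0 1 ∩ C)) := by ring
    _ ≤ V⁻¹ ^ 2 * (ENNReal.ofReal (√(1 - ε ^ 2 / 4) ^ d) * V) ^ 2 := by gcongr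
    _ = ENNReal.ofReal (√(1 - ε ^ 2 / 4)) ^ (2 * d) := by
        rw [mul_pow, mul_left_comm, ← mul_pow, ENNReal.inv_mul_cancel hV hV', one_pow, mul_one,
          ENNReal.ofReal_pow (Real.sqrt_nonneg _), ← pow_mul, mul_comm]
    _ = ENNReal.ofReal (1 - ε ^ 2 / 4) ^ d := by
        rw [pow_mul, ← ENNReal.ofReal_pow (Real.sqrt_nonneg _), Real.sq_sqrt',
          ENNReal.ofReal_max, ENNReal.ofReal_zero, max_eq_left zero_le]

theorem ofReal_one_sub_sq_div_four_pow_le (d : ℕ) (ε : ℝ) :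
    ENNReal.ofReal (1 - ε ^ 2 / 4) ^ d ≤
      ENNReal.ofReal (exp (-(2 * d) * ((2 - √3) / 3) * ε ^ 2)) := by
  have h3 : (13 : ℝ) / 8 ≤ √3 := Real.le_sqrt_of_sq_le (by norm_num)
  calc ENNReal.ofReal (1 - ε ^ 2 / 4) ^ d ≤ ENNReal.ofReal (exp (-(ε ^ 2 / 4))) ^ d := by
        gcongr
        linarith [add_one_le_exp (-(ε ^ 2 / 4))]
    _ = ENNReal.ofReal (exp (d * -(ε ^ 2 / 4))) := by
        rw [← ENNReal.ofReal_pow (exp_pos _).le, exp_nat_mul]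
    _ ≤ ENNReal.ofReal (exp (-(2 * d) * ((2 - √3) / 3) * ε ^ 2)) := by
        refine ENNReal.ofReal_le_ofReal (exp_le_exp.2 ?_)
        nlinarith [sq_nonneg ε, (Nat.cast_nonneg d : (0 : ℝ) ≤ d),
          mul_nonneg (Nat.cast_nonneg d : (0 : ℝ) ≤ d) (sq_nonneg ε)]

theorem stmt_3_general (d : ℕ)
    (ν : Measure (EuclideanSpace ℝ (Fin d)))
    (hν : ν = (volume (Metric.closedBall (0 : EuclideanSpace ℝ (Fin d)) 1))⁻¹ •
      volume.restrict (Metric.closedBall (0 : EuclideanSpace ℝ (Fin d)) 1))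
    (B : Set (EuclideanSpace ℝ (Fin d))) (hB : MeasurableSet B)
    (hhalf : (1 : ℝ≥0∞) / 2 ≤ ν B)
    (ε : ℝ) (hε : 0 < ε) :
    1 - (1 / (ν B).toReal) *
        Real.exp (-(2 * d) * ((2 - Real.sqrt 3) / 3) * ε ^ 2) ≤
      (ν (Metric.thickening ε B)).toReal := by
  replace hν : ν = ProbabilityTheory.cond volume (Metric.closedBall 0 1) := hν
  have : IsProbabilityMeasure ν := hν ▸ ProbabilityTheory.cond_isProbabilityMeasure_of_finite
    (Metric.measure_closedBall_pos _ _ one_pos).ne' measure_closedBall_lt_top.ne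
  have hT : MeasurableSet (Metric.thickening ε B) := Metric.isOpen_thickening.measurableSet
  have hsep : ∀ x ∈ B, ∀ y ∈ (Metric.thickening ε B)ᶜ, ε ≤ dist x y := fun x hx y hy => by
    rw [dist_comm]
    exact not_lt.1 fun h => hy (Metric.mem_thickening_iff.2 ⟨x, hx, h⟩)
  have hprod : ν B * ν (Metric.thickening ε B)ᶜ ≤ _ := hν ▸
    (cond_closedBall_mul_cond_closedBall_le hB hT.compl hε.le hsep).trans
      (ofReal_one_sub_sq_div_four_pow_le d ε)
  rw [prob_compl_eq_one_sub hT] at hprod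
  have hreal := ENNReal.toReal_mono ENNReal.ofReal_ne_top hprod
  rw [ENNReal.toReal_mul, ENNReal.toReal_sub_of_le prob_le_one ENNReal.one_ne_top,
    ENNReal.toReal_one, ENNReal.toReal_ofReal (exp_pos _).le] at hreal
  have hp : 0 < (ν B).toReal :=
    ENNReal.toReal_pos (ne_bot_of_le_ne_bot (by norm_num) hhalf) (measure_ne_top _ _)
  rw [one_div, ← div_eq_inv_mul, sub_le_comm, le_div_iff₀ hp]
  linarith

theorem stmt_3 (d : ℕ) (hd : 1 ≤ d)
    (ν : Measure (EuclideanSpace ℝ (Fin d)))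
    (hν : ν = (volume (Metric.closedBall (0 : EuclideanSpace ℝ (Fin d)) 1))⁻¹ •
      volume.restrict (Metric.closedBall (0 : EuclideanSpace ℝ (Fin d)) 1))
    (B : Set (EuclideanSpace ℝ (Fin d))) (hB : MeasurableSet B)
    (hBsub : B ⊆ Metric.closedBall (0 : EuclideanSpace ℝ (Fin d)) 1)
    (hhalf : (1 : ℝ≥0∞) / 2 ≤ ν B)
    (ε : ℝ) (hε : 0 < ε) (hε2 : ε ≤ 2) :
    1 - (1 / (ν B).toReal) *
        Real.exp (-(2 * d) * ((2 - Real.sqrt 3) / 3) * ε ^ 2) ≤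
      (ν (Metric.thickening ε B)).toReal :=
  stmt_3_general d ν hν B hB hhalf ε hε
end

section
/- Let d ≥ 1 and ε > 0, and let μ_d be the uniform probability measure on the unit cube [0,1]^d. Consider the classifier h*(x) = 1 if Σ_{i=1}^d x_i > d/2 and h*(x) = 0 otherwise, with ground-truth labels given by h* itself. Then the measure of the set of points that can be successfully attacked under ℓ∞ budget ε, namely μ_d({x ∈ [0,1]^d : ∃ δ ∈ ℝ^d with ‖δ‖_∞ ≤ ε such that (Σ_i (x_i + δ_i) > d/2) is not equivalent to (Σ_i x_i > d/2)}), is at least 1 − 1/(4 d ε²). Consequently the adversarial robust error of this Bayes classifier under zero-one loss and ℓ∞ budget ε is at least 1 − 1/(4 d ε²). -/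
open MeasureTheory Real
open scoped ENNReal

/-- The unit cube `[0,1]^d` in Euclidean space. -/
def unitCube (d : ℕ) : Set (EuclideanSpace ℝ (Fin d)) :=
  {x | ∀ i, x i ∈ Set.Icc (0 : ℝ) 1}

namespace Stmt4Aux

noncomputable section

def cubeP (d : ℕ) : Set (Fin d → ℝ) := Set.pi Set.univ (fun _ => Set.Icc (0:ℝ) 1)

lemma cubeP_measurable (d : ℕ) : MeasurableSet (cubeP d) :=
  MeasurableSet.univ_pi (fun _ => measurableSet_Icc)

lemma cubeP_compact (d : ℕ) : IsCompact (cubeP d) :=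
  isCompact_univ_pi (fun _ => isCompact_Icc)

lemma int_lin : ∫ t in Set.Icc (0:ℝ) 1, (t - 1/2) = 0 := by
  rw [MeasureTheory.integral_Icc_eq_integral_Ioc,
    ← intervalIntegral.integral_of_le (by norm_num : (0:ℝ) ≤ 1)]
  rw [intervalIntegral.integral_comp_sub_right (fun t => t) (1/2)]
  rw [integral_id]
  norm_num

lemma int_sq : ∫ t in Set.Icc (0:ℝ) 1, (t - 1/2)^2 = 1/12 := by
  rw [MeasureTheory.integral_Icc_eq_integral_Ioc,
    ← intervalIntegral.integral_of_le (by norm_num : (0:ℝ) ≤ 1)]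
  rw [intervalIntegral.integral_comp_sub_right (fun t => t^2) (1/2)]
  rw [integral_pow]
  norm_num

lemma cube_integral_prod (d : ℕ) (Φ : Fin d → ℝ → ℝ) :
    ∫ x in cubeP d, ∏ k, Φ k (x k) = ∏ k, ∫ t in Set.Icc (0:ℝ) 1, Φ k t := by
  rw [← integral_indicator (cubeP_measurable d)]
  have h : (cubeP d).indicator (fun x => ∏ k, Φ k (x k))
      = fun x => ∏ k, (Set.Icc (0:ℝ) 1).indicator (Φ k) (x k) := by
    funext x
    by_cases hx : x ∈ cubeP d
    · rw [Set.indicator_of_mem hx]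
      exact Finset.prod_congr rfl fun k _ =>
        (Set.indicator_of_mem (hx k (Set.mem_univ k)) (Φ k)).symm
    · rw [Set.indicator_of_notMem hx]
      have h2 : ¬ ∀ k, x k ∈ Set.Icc (0:ℝ) 1 := fun h => hx (fun k _ => h k)
      obtain ⟨k, hk⟩ := not_forall.1 h2
      exact (Finset.prod_eq_zero (Finset.mem_univ k)
        (Set.indicator_of_notMem hk (Φ k))).symm
  rw [h, volume_pi]
  beta_reduce
  rw [MeasureTheory.integral_fintype_prod_eq_prod (ι := Fin d)
    (fun k => (Set.Icc (0:ℝ) 1).indicator (Φ k))]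
  exact Finset.prod_congr rfl fun k _ => integral_indicator measurableSet_Icc

lemma cube_int_single (d : ℕ) (i : Fin d) (φ : ℝ → ℝ) :
    ∫ x in cubeP d, φ (x i) = ∫ t in Set.Icc (0:ℝ) 1, φ t := by
  have h := cube_integral_prod d (fun k => if k = i then φ else fun _ => 1)
  have h1 : ∀ x : Fin d → ℝ,
      (∏ k, (if k = i then φ else fun _ => (1:ℝ)) (x k)) = φ (x i) := by
    intro x
    rw [Finset.prod_eq_single i (fun b _ hb => by simp [hb]) (by simp)]
    simp
  have h2 : (∏ k, ∫ t in Set.Icc (0:ℝ) 1, (if k = i then φ else fun _ => (1:ℝ)) t)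
      = ∫ t in Set.Icc (0:ℝ) 1, φ t := by
    rw [Finset.prod_eq_single i (fun b _ hb => by simp [hb]) (by simp)]
    simp
  simp_rw [h1, h2] at h
  exact h

lemma cube_int_pair (d : ℕ) {i j : Fin d} (hij : i ≠ j) :
    ∫ x in cubeP d, (x i - 1/2) * (x j - 1/2) = 0 := by
  set φ : ℝ → ℝ := fun t => t - 1/2 with hφ
  set Φ : Fin d → ℝ → ℝ := fun k => if k = i then φ else if k = j then φ else fun _ => 1 with hΦ
  have h := cube_integral_prod d Φ
  have h1 : ∀ x : Fin d → ℝ, (∏ k, Φ k (x k)) = (x i - 1/2) * (x j - 1/2) := by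
    intro x
    rw [← Finset.mul_prod_erase Finset.univ _ (Finset.mem_univ i),
      ← Finset.mul_prod_erase _ _ (Finset.mem_erase.2 ⟨Ne.symm hij, Finset.mem_univ j⟩)]
    have : ∀ k ∈ (Finset.univ.erase i).erase j, Φ k (x k) = 1 := by
      intro k hk
      have hki : k ≠ i := Finset.ne_of_mem_erase (Finset.mem_of_mem_erase hk)
      have hkj : k ≠ j := Finset.ne_of_mem_erase hk
      simp [hΦ, hki, hkj]
    rw [Finset.prod_congr rfl this]
    simp [hΦ, hij, φ]
  have h2 : (∏ k, ∫ t in Set.Icc (0:ℝ) 1, Φ k t) = 0 :=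
    Finset.prod_eq_zero (Finset.mem_univ i) (by simp [hΦ]; exact int_lin)
  simp_rw [h1, h2] at h
  exact h

lemma key_integral (d : ℕ) :
    ∫ x in cubeP d, (∑ i, (x i - 1/2))^2 = d/12 := by
  have hint : ∀ i j : Fin d, IntegrableOn
      (fun x : Fin d → ℝ => (x i - 1/2) * (x j - 1/2)) (cubeP d) volume := by
    intro i j
    exact (((continuous_apply i).sub continuous_const).mul
      ((continuous_apply j).sub continuous_const)).continuousOn.integrableOn_compact
      (cubeP_compact d)
  have expand : ∀ x : Fin d → ℝ, (∑ i, (x i - 1/2))^2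
      = ∑ i, ∑ j, (x i - 1/2) * (x j - 1/2) := by
    intro x
    rw [sq, Finset.sum_mul_sum]
  simp_rw [expand]
  rw [integral_finset_sum _ (fun i _ => integrable_finset_sum _ (fun j _ => hint i j))]
  have : ∀ i : Fin d, (∫ x in cubeP d, ∑ j, (x i - 1/2) * (x j - 1/2)) = 1/12 := by
    intro i
    rw [integral_finset_sum _ (fun j _ => hint i j)]
    rw [Finset.sum_eq_single i (fun j _ hj => cube_int_pair d (Ne.symm hj)) (by simp)]
    have := cube_int_single d i (fun t => (t - 1/2)^2)
    simp_rw [sq] at this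
    rw [this]
    have := int_sq
    simp_rw [sq] at this
    exact this
  simp_rw [this]
  simp
  ring

lemma sum_sub_half (d : ℕ) (x : Fin d → ℝ) :
    ∑ i, (x i - 1/2) = (∑ i, x i) - d/2 := by
  rw [Finset.sum_sub_distrib, Finset.sum_const, Finset.card_univ, Fintype.card_fin,
    nsmul_eq_mul]
  ring

lemma cube_measure_bound (d : ℕ) (hd : 1 ≤ d) (ε : ℝ) (hε : 0 < ε) :
    volume (cubeP d ∩ {x : Fin d → ℝ | (d:ℝ)*ε ≤ |(∑ i, x i) - d/2|})
      ≤ ENNReal.ofReal (1/(4*d*ε^2)) := by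
  have hd0 : (0:ℝ) < d := by exact_mod_cast hd
  set c : ℝ := (d:ℝ) * ε with hc
  have hc0 : 0 < c := mul_pos hd0 hε
  have hSmeas : Measurable (fun x : Fin d → ℝ => (∑ i, x i) - d/2) :=
    (Finset.measurable_sum _ (fun i _ => measurable_pi_apply i)).sub measurable_const
  set f : (Fin d → ℝ) → ℝ≥0∞ := fun x => ENNReal.ofReal (((∑ i, x i) - d/2)^2) with hf
  have hfmeas : Measurable f := ENNReal.measurable_ofReal.comp (hSmeas.pow_const 2)
  set ν : Measure (Fin d → ℝ) := volume.restrict (cubeP d) with hν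
  have markov := mul_meas_ge_le_lintegral₀ (μ := ν) hfmeas.aemeasurable
    (ENNReal.ofReal (c^2))
  have hint : IntegrableOn (fun x : Fin d → ℝ => ((∑ i, x i) - d/2)^2) (cubeP d) volume := by
    refine (Continuous.continuousOn ?_).integrableOn_compact (cubeP_compact d)
    exact ((continuous_finset_sum _ (fun i _ => continuous_apply i)).sub
      continuous_const).pow 2
  have hlint : ∫⁻ x, f x ∂ν = ENNReal.ofReal ((d:ℝ)/12) := by
    rw [hf, ← ofReal_integral_eq_lintegral_ofReal hint
      (Filter.Eventually.of_forall (fun x => sq_nonneg _))]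
    congr 1
    have := key_integral d
    simp_rw [sum_sub_half] at this
    exact this
  rw [hlint] at markov
  have hsub : cubeP d ∩ {x : Fin d → ℝ | c ≤ |(∑ i, x i) - d/2|}
      ⊆ {x | ENNReal.ofReal (c^2) ≤ f x} := by
    rintro x ⟨-, hx⟩
    have h1 : c^2 ≤ ((∑ i, x i) - d/2)^2 := by
      calc c^2 ≤ |(∑ i, x i) - d/2|^2 := pow_le_pow_left₀ hc0.le hx 2
      _ = _ := sq_abs _
    exact ENNReal.ofReal_le_ofReal h1
  have hmeas_le : volume (cubeP d ∩ {x : Fin d → ℝ | c ≤ |(∑ i, x i) - d/2|})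
      ≤ ν {x | ENNReal.ofReal (c^2) ≤ f x} := by
    rw [hν, Measure.restrict_apply₀' (cubeP_measurable d).nullMeasurableSet]
    exact measure_mono (fun x hx => ⟨hsub hx, hx.1⟩)
  have h1 : volume (cubeP d ∩ {x : Fin d → ℝ | c ≤ |(∑ i, x i) - d/2|})
      ≤ ENNReal.ofReal ((d:ℝ)/12) / ENNReal.ofReal (c^2) := by
    rw [ENNReal.le_div_iff_mul_le (Or.inl (by positivity)) (Or.inl ENNReal.ofReal_ne_top)]
    calc volume (cubeP d ∩ {x : Fin d → ℝ | c ≤ |(∑ i, x i) - d/2|}) * ENNReal.ofReal (c^2)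
        ≤ ν {x | ENNReal.ofReal (c^2) ≤ f x} * ENNReal.ofReal (c^2) := by
          exact mul_le_mul_left hmeas_le _
      _ = ENNReal.ofReal (c^2) * ν {x | ENNReal.ofReal (c^2) ≤ f x} := mul_comm _ _
      _ ≤ ENNReal.ofReal ((d:ℝ)/12) := markov
  refine h1.trans ?_
  rw [← ENNReal.ofReal_div_of_pos (by positivity)]
  apply ENNReal.ofReal_le_ofReal
  rw [hc]
  rw [div_le_div_iff₀ (by positivity) (by positivity)]
  ring_nf
  nlinarith [sq_nonneg ε, hd0, hε, mul_pos hd0 (mul_pos hd0 (mul_pos hε hε))]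

end
end Stmt4Aux

open Stmt4Aux

/-- The mass of points of the unit cube that can be successfully attacked (under `ℓ∞`
budget `ε`) against the Bayes classifier `x ↦ (∑ i, x i > d / 2)` is at least
`1 - 1/(4 d ε²)`; consequently the adversarial robust error of this classifier under
zero-one loss is at least `1 - 1/(4 d ε²)`. -/
theorem stmt_4 (d : ℕ) (hd : 1 ≤ d) (ε : ℝ) (hε : 0 < ε)
    (μ : Measure (EuclideanSpace ℝ (Fin d)))
    (hμ : μ = volume.restrict (unitCube d)) :
    ENNReal.ofReal (1 - 1 / (4 * d * ε ^ 2)) ≤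
      μ {x : EuclideanSpace ℝ (Fin d) |
          ∃ δ : EuclideanSpace ℝ (Fin d), (∀ i, |δ i| ≤ ε) ∧
            ¬ (((∑ i, (x i + δ i)) > (d : ℝ) / 2) ↔ ((∑ i, x i) > (d : ℝ) / 2))} := by
  classical
  have hd0 : (0:ℝ) < d := by exact_mod_cast hd
  set A : Set (EuclideanSpace ℝ (Fin d)) :=
    {x : EuclideanSpace ℝ (Fin d) |
      ∃ δ : EuclideanSpace ℝ (Fin d), (∀ i, |δ i| ≤ ε) ∧
        ¬ (((∑ i, (x i + δ i)) > (d : ℝ) / 2) ↔ ((∑ i, x i) > (d : ℝ) / 2))} with hA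
  set B : Set (EuclideanSpace ℝ (Fin d)) :=
    {x : EuclideanSpace ℝ (Fin d) | (d:ℝ)*ε ≤ |(∑ i, x i) - d/2|} with hB
  -- step 1: Bᶜ ⊆ A
  have hBA : Bᶜ ⊆ A := by
    intro x hx
    have hx' : |(∑ i, x i) - (d:ℝ)/2| < (d:ℝ)*ε := not_le.1 hx
    have habs := abs_lt.1 hx'
    by_cases hS : (∑ i, x i) > (d:ℝ)/2
    · refine ⟨(WithLp.toLp 2 (fun _ => -ε) : EuclideanSpace ℝ (Fin d)), fun i => by
        rw [abs_neg, abs_of_pos hε], ?_⟩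
      have hsum : (∑ i, (x i + (-ε))) = (∑ i, x i) - (d:ℝ)*ε := by
        rw [Finset.sum_add_distrib, Finset.sum_const, Finset.card_univ, Fintype.card_fin,
          nsmul_eq_mul]
        ring
      rw [hsum]
      intro hiff
      have := hiff.2 hS
      linarith [habs.2]
    · refine ⟨(WithLp.toLp 2 (fun _ => ε) : EuclideanSpace ℝ (Fin d)), fun i => by
        rw [abs_of_pos hε], ?_⟩
      have hsum : (∑ i, (x i + ε)) = (∑ i, x i) + (d:ℝ)*ε := by
        rw [Finset.sum_add_distrib, Finset.sum_const, Finset.card_univ, Fintype.card_fin,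
          nsmul_eq_mul]
      rw [hsum]
      intro hiff
      have h2 : (∑ i, x i) + (d:ℝ)*ε > (d:ℝ)/2 := by linarith [habs.1]
      exact hS (hiff.1 h2)
  -- step 2: transfer to the pi space
  have e_mp := EuclideanSpace.volume_preserving_symm_measurableEquiv_toLp (Fin d)
  have hBpi_meas : MeasurableSet (cubeP d ∩
      {x : Fin d → ℝ | (d:ℝ)*ε ≤ |(∑ i, x i) - d/2|}) := by
    refine (cubeP_measurable d).inter ?_
    exact measurableSet_le measurable_const
      ((Finset.measurable_sum _ (fun i _ => measurable_pi_apply i)).sub measurable_const).abs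
  have hpre : (MeasurableEquiv.toLp 2 (Fin d → ℝ)).symm ⁻¹'
      (cubeP d ∩ {x : Fin d → ℝ | (d:ℝ)*ε ≤ |(∑ i, x i) - d/2|}) = unitCube d ∩ B := by
    ext x
    constructor
    · rintro ⟨h1, h2⟩
      exact ⟨fun i => h1 i (Set.mem_univ i), h2⟩
    · rintro ⟨h1, h2⟩
      exact ⟨fun i _ => h1 i, h2⟩
  have hcube : unitCube d = (MeasurableEquiv.toLp 2 (Fin d → ℝ)).symm ⁻¹' (cubeP d) := by
    ext x
    exact ⟨fun h i _ => h i, fun h i => h i (Set.mem_univ i)⟩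
  have hμB : μ B ≤ ENNReal.ofReal (1/(4*d*ε^2)) := by
    rw [hμ, hcube, Measure.restrict_apply₀'
      (((cubeP_measurable d).preimage
        (MeasurableEquiv.toLp 2 (Fin d → ℝ)).symm.measurable).nullMeasurableSet)]
    have heq : B ∩ (MeasurableEquiv.toLp 2 (Fin d → ℝ)).symm ⁻¹' (cubeP d)
        = (MeasurableEquiv.toLp 2 (Fin d → ℝ)).symm ⁻¹'
          (cubeP d ∩ {x : Fin d → ℝ | (d:ℝ)*ε ≤ |(∑ i, x i) - d/2|}) := by
      rw [hpre, ← hcube, Set.inter_comm]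
    rw [heq, e_mp.measure_preimage hBpi_meas.nullMeasurableSet]
    exact cube_measure_bound d hd ε hε
  -- step 3: total mass is 1
  have huniv : μ Set.univ = 1 := by
    rw [hμ, Measure.restrict_apply_univ, hcube,
      e_mp.measure_preimage (cubeP_measurable d).nullMeasurableSet]
    rw [cubeP, MeasureTheory.volume_pi_pi]
    simp [Real.volume_Icc]
  -- step 4: conclude
  set r : ℝ := 1/(4*d*ε^2) with hr
  rcases le_or_gt 1 r with hr1 | hr1
  · rw [ENNReal.ofReal_of_nonpos (by linarith)]
    exact zero_le
  · have hr0 : 0 < r := by positivity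
    have key : ENNReal.ofReal (1 - r) + ENNReal.ofReal r ≤ μ Bᶜ + ENNReal.ofReal r := by
      rw [← ENNReal.ofReal_add (by linarith) hr0.le]
      have h1 : ENNReal.ofReal (1 - r + r) = 1 := by
        norm_num
      rw [h1, ← huniv, ← Set.compl_union_self B]
      exact (measure_union_le _ _).trans (add_le_add_right hμB _)
    have h2 : ENNReal.ofReal (1 - r) ≤ μ Bᶜ :=
      (ENNReal.add_le_add_iff_right ENNReal.ofReal_ne_top).1 key
    exact h2.trans (measure_mono hBA)
end
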